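/- Let Γ ↷ (X,ν) be a measurable measure-class-preserving action of a countable discrete group on a σ-finite measure space, let S ⊆ Γ be a finite symmetric subset containing the identity, and let Y ⊆ X be measurable with ν(Y) finite. Then for every measurable A ⊆ Y one has ν(A) ≤ ν̃_{Y,S}(A) ≤ |S|·√(ν(A)·ν(Y)); in particular ν̃_{Y,S}(Y) is finite. Moreover ν̃_{Y,S} and the restriction ν|_Y have the same null sets. -/

import Mathlib

open MeasureTheory ENNReal Filter
open scoped Classical

noncomputable section

/-- The Radon–Nikodym derivative `r(γ,x) = d(γ⁻¹_*ν)/dν (x)` of a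
measure-class-preserving action. -/
def rnd {Γ X : Type*} [Group Γ] [MulAction Γ X] [MeasurableSpace X]
    (ν : Measure X) (γ : Γ) (x : X) : ℝ≥0∞ :=
  Measure.rnDeriv (ν.map (fun y => γ⁻¹ • y)) ν x

/-- `σ_{Y,S}(x) = Σ_{s ∈ S, s·x ∈ Y} r(s,x)^{1/2}`. -/
def sigmaLoc {Γ X : Type*} [Group Γ] [MulAction Γ X] [MeasurableSpace X]
    (ν : Measure X) (S : Finset Γ) (Y : Set X) (x : X) : ℝ≥0∞ :=
  ∑ s ∈ S, if s • x ∈ Y then (rnd ν s x) ^ (1/2 : ℝ) else 0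

/-- The measure `ν̃_{Y,S}`, given by `dν̃_{Y,S} = σ_{Y,S} · d(ν|_Y)`. -/
def nuT {Γ X : Type*} [Group Γ] [MulAction Γ X] [MeasurableSpace X]
    (ν : Measure X) (S : Finset Γ) (Y : Set X) : Measure X :=
  (ν.restrict Y).withDensity (sigmaLoc ν S Y)

/-- The normalised local Markov kernel
`Π_{Y,S}(x,·) = (1/σ_{Y,S}(x)) Σ_{s ∈ S, s·x ∈ Y} r(s,x)^{1/2} δ_{s·x}`. -/
def locKer {Γ X : Type*} [Group Γ] [MulAction Γ X] [MeasurableSpace X]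
    (ν : Measure X) (S : Finset Γ) (Y : Set X) (x : X) : Measure X :=
  (sigmaLoc ν S Y x)⁻¹ •
    ∑ s ∈ S, (if s • x ∈ Y then (rnd ν s x) ^ (1/2 : ℝ) else 0) • Measure.dirac (s • x)

/-- The `ν̃_{Y,S}`-size of the boundary of `A ⊆ Y` with respect to `Π_{Y,S}`:
`|∂ A| = ∫_A Π_{Y,S}(x, Y∖A) dν̃_{Y,S}(x)`. -/
def mkBdry {Γ X : Type*} [Group Γ] [MulAction Γ X] [MeasurableSpace X]
    (ν : Measure X) (S : Finset Γ) (Y A : Set X) : ℝ≥0∞ :=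
  ∫⁻ x in A, locKer ν S Y x (Y \ A) ∂(nuT ν S Y)

/-- `Y` is a domain of Markov `S`-expansion: the Cheeger constant of the normalised local
Markov kernel `Π_{Y,S}` with respect to its reversing measure `ν̃_{Y,S}` is strictly
positive. -/
def MarkovSExpansion {Γ X : Type*} [Group Γ] [MulAction Γ X] [MeasurableSpace X]
    (ν : Measure X) (S : Finset Γ) (Y : Set X) : Prop :=
  0 < sInf { q : ℝ≥0∞ | ∃ A : Set X, MeasurableSet A ∧ A ⊆ Y ∧ 0 < nuT ν S Y A ∧
    nuT ν S Y A ≤ nuT ν S Y Y / 2 ∧ q = mkBdry ν S Y A / nuT ν S Y A }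

/-!
On `Y` the summand `s = 1` of the density `σ_{Y,S}` is `r(1,·)^{1/2} = 1` a.e., so `σ_{Y,S} ≥ 1`
there; this gives `ν|_Y ≤ ν̃_{Y,S}`, and with `ν̃_{Y,S} ≪ ν|_Y` the equality of null sets.
For the upper bound, by Cauchy–Schwarz the `s`-th summand integrates over `A` to at most
`(∫_B r(s,·) dν)^{1/2} ν(A)^{1/2}` with `B = A ∩ s⁻¹Y`, and `∫_B r(s,·) dν ≤ ν(s·B) ≤ ν(Y)`.
-/

lemma ENNReal.lintegral_rpow_half_le {α : Type*} [MeasurableSpace α] (μ : Measure α)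
    {f : α → ℝ≥0∞} (hf : AEMeasurable f μ) :
    ∫⁻ x, f x ^ (1/2 : ℝ) ∂μ ≤ ((∫⁻ x, f x ∂μ) * μ Set.univ) ^ (1/2 : ℝ) := by
  have hCS := ENNReal.lintegral_mul_le_Lp_mul_Lq μ Real.HolderConjugate.two_two
    (hf.pow_const (1/2 : ℝ)) (aemeasurable_const (b := (1 : ℝ≥0∞)))
  have hsq : ∀ x, (f x ^ (1/2 : ℝ)) ^ (2 : ℝ) = f x := fun x => by
    rw [← ENNReal.rpow_mul]; norm_num
  simp only [Pi.mul_apply, mul_one, hsq, ENNReal.one_rpow, lintegral_const, one_mul] at hCS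
  rwa [ENNReal.mul_rpow_of_nonneg _ _ (by norm_num)]

section

variable {Γ X : Type*} [Group Γ] [MulAction Γ X] [MeasurableSpace X] {ν : Measure X}

lemma measurable_rnd (ν : Measure X) (γ : Γ) : Measurable (rnd ν γ) :=
  Measure.measurable_rnDeriv _ _

lemma rnd_one_ae_eq (ν : Measure X) [SigmaFinite ν] : rnd ν (1 : Γ) =ᵐ[ν] 1 := by
  show (ν.map fun y => (1 : Γ)⁻¹ • y).rnDeriv ν =ᵐ[ν] fun _ => 1
  simpa only [inv_one, one_smul, Measure.map_id'] using ν.rnDeriv_self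

lemma sigmaLoc_eq_sum_indicator (S : Finset Γ) (Y : Set X) (x : X) :
    sigmaLoc ν S Y x =
      ∑ s ∈ S, ((s • ·) ⁻¹' Y).indicator (fun x => rnd ν s x ^ (1/2 : ℝ)) x :=
  rfl

lemma one_le_sigmaLoc_ae [SigmaFinite ν] {S : Finset Γ} (hone : (1 : Γ) ∈ S) {Y : Set X}
    (hY : MeasurableSet Y) : ∀ᵐ x ∂ν.restrict Y, 1 ≤ sigmaLoc ν S Y x := by
  filter_upwards [ae_restrict_mem hY, ae_restrict_of_ae (rnd_one_ae_eq (Γ := Γ) ν)]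
    with x hxY hx
  calc (1 : ℝ≥0∞) = if (1 : Γ) • x ∈ Y then rnd ν (1 : Γ) x ^ (1/2 : ℝ) else 0 := by
        simp [hxY, hx]
    _ ≤ sigmaLoc ν S Y x :=
        Finset.single_le_sum (f := fun s => if s • x ∈ Y then rnd ν s x ^ (1/2 : ℝ) else 0)
          (fun _ _ => zero_le) hone

lemma restrict_le_nuT [SigmaFinite ν] {S : Finset Γ} (hone : (1 : Γ) ∈ S) {Y : Set X}
    (hY : MeasurableSet Y) : ν.restrict Y ≤ nuT ν S Y := by
  conv_lhs => rw [← withDensity_one (μ := ν.restrict Y)]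
  exact withDensity_mono (one_le_sigmaLoc_ae hone hY)

lemma setLIntegral_rnd_le_of_mapsTo (hmeas : ∀ γ : Γ, Measurable (fun x : X => γ • x))
    {Y : Set X} (hY : MeasurableSet Y) {s : Γ} {B : Set X} (hB : Set.MapsTo (s • ·) B Y) :
    ∫⁻ x in B, rnd ν s x ∂ν ≤ ν Y :=
  calc ∫⁻ x in B, rnd ν s x ∂ν ≤ ν.map (s⁻¹ • ·) B := Measure.setLIntegral_rnDeriv_le B
    _ ≤ ν.map (s⁻¹ • ·) ((s • ·) ⁻¹' Y) := measure_mono hB.subset_preimage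
    _ = ν Y := by
        rw [Measure.map_apply (hmeas s⁻¹) (hmeas s hY), ← Set.preimage_comp]
        simp [Function.comp_def]

lemma setLIntegral_indicator_rnd_rpow_le (hmeas : ∀ γ : Γ, Measurable (fun x : X => γ • x))
    {Y : Set X} (hY : MeasurableSet Y) (s : Γ) (A : Set X) :
    ∫⁻ x in A, ((s • ·) ⁻¹' Y).indicator (fun x => rnd ν s x ^ (1/2 : ℝ)) x ∂ν ≤
      (ν A * ν Y) ^ (1/2 : ℝ) := by
  rw [lintegral_indicator (hmeas s hY), Measure.restrict_restrict (hmeas s hY)]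
  calc ∫⁻ x in (s • ·) ⁻¹' Y ∩ A, rnd ν s x ^ (1/2 : ℝ) ∂ν
      ≤ ((∫⁻ x in (s • ·) ⁻¹' Y ∩ A, rnd ν s x ∂ν) * ν ((s • ·) ⁻¹' Y ∩ A)) ^ (1/2 : ℝ) := by
        simpa using ENNReal.lintegral_rpow_half_le (ν.restrict ((s • ·) ⁻¹' Y ∩ A))
          (measurable_rnd ν s).aemeasurable
    _ ≤ (ν Y * ν A) ^ (1/2 : ℝ) := by
        gcongr
        · exact setLIntegral_rnd_le_of_mapsTo hmeas hY fun x hx => hx.1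
        · exact Set.inter_subset_right
    _ = (ν A * ν Y) ^ (1/2 : ℝ) := by rw [mul_comm]

lemma nuT_apply_le (hmeas : ∀ γ : Γ, Measurable (fun x : X => γ • x)) (S : Finset Γ)
    {Y : Set X} (hY : MeasurableSet Y) {A : Set X} (hA : MeasurableSet A) (hAY : A ⊆ Y) :
    nuT ν S Y A ≤ S.card * (ν A * ν Y) ^ (1/2 : ℝ) := by
  rw [nuT, withDensity_apply _ hA, Measure.restrict_restrict hA,
    Set.inter_eq_self_of_subset_left hAY]
  simp_rw [sigmaLoc_eq_sum_indicator]
  rw [lintegral_finsetSum _ fun s _ =>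
    ((measurable_rnd ν s).pow_const _).indicator (hmeas s hY)]
  calc ∑ s ∈ S, ∫⁻ x in A, ((s • ·) ⁻¹' Y).indicator (fun x => rnd ν s x ^ (1/2 : ℝ)) x ∂ν
      ≤ ∑ _s ∈ S, (ν A * ν Y) ^ (1/2 : ℝ) :=
        Finset.sum_le_sum fun s _ => setLIntegral_indicator_rnd_rpow_le hmeas hY s A
    _ = S.card * (ν A * ν Y) ^ (1/2 : ℝ) := by rw [Finset.sum_const, nsmul_eq_mul]

end

theorem nuT_estimates_general {Γ X : Type*} [Group Γ] [MulAction Γ X]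
    [MeasurableSpace X] (ν : Measure X) [SigmaFinite ν]
    (hmeas : ∀ γ : Γ, Measurable (fun x : X => γ • x))
    (S : Finset Γ) (hone : (1 : Γ) ∈ S)
    (Y : Set X) (hY : MeasurableSet Y) (hYfin : ν Y < ⊤) :
    (∀ A : Set X, MeasurableSet A → A ⊆ Y →
        ν A ≤ nuT ν S Y A ∧
        nuT ν S Y A ≤ (S.card : ℝ≥0∞) * (ν A * ν Y) ^ (1/2 : ℝ)) ∧
    nuT ν S Y Y < ⊤ ∧
    (∀ A : Set X, MeasurableSet A → (nuT ν S Y A = 0 ↔ (ν.restrict Y) A = 0)) := by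
  have hle := restrict_le_nuT (ν := ν) hone hY
  refine ⟨fun A hA hAY => ⟨?_, nuT_apply_le hmeas S hY hA hAY⟩, ?_, fun A _ => ⟨?_, ?_⟩⟩
  · simpa [Measure.restrict_eq_self ν hAY] using hle A
  · refine (nuT_apply_le hmeas S hY hY subset_rfl).trans_lt ?_
    exact ENNReal.mul_lt_top (ENNReal.natCast_lt_top _)
      (ENNReal.rpow_lt_top_of_nonneg (by norm_num) (ENNReal.mul_lt_top hYfin hYfin).ne)
  · exact fun h => le_antisymm (h ▸ hle A) zero_le
  · exact fun h => withDensity_absolutelyContinuous _ _ h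

/-- **Proposition 3.14(1)-(2).** For a measure-class-preserving action
`Γ ↷ (X,ν)` on a σ-finite space, a finite symmetric set `S ∋ 1` and a measurable
`Y ⊆ X` with `ν(Y) < ∞`: for every measurable `A ⊆ Y` one has
`ν(A) ≤ ν̃_{Y,S}(A) ≤ |S|·√(ν(A)·ν(Y))`; in particular `ν̃_{Y,S}(Y) < ∞`.
Moreover `ν̃_{Y,S}` and `ν|_Y` have the same null sets. -/
theorem nuT_estimates {Γ X : Type*} [Group Γ] [Countable Γ] [MulAction Γ X]
    [MeasurableSpace X] (ν : Measure X) [SigmaFinite ν]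
    (hmeas : ∀ γ : Γ, Measurable (fun x : X => γ • x))
    (hmcp : ∀ γ : Γ, Measure.QuasiMeasurePreserving (fun x : X => γ • x) ν ν)
    (S : Finset Γ) (hsymm : ∀ s ∈ S, s⁻¹ ∈ S) (hone : (1 : Γ) ∈ S)
    (Y : Set X) (hY : MeasurableSet Y) (hYfin : ν Y < ⊤) :
    (∀ A : Set X, MeasurableSet A → A ⊆ Y →
        ν A ≤ nuT ν S Y A ∧
        nuT ν S Y A ≤ (S.card : ℝ≥0∞) * (ν A * ν Y) ^ (1/2 : ℝ)) ∧
    nuT ν S Y Y < ⊤ ∧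
    (∀ A : Set X, MeasurableSet A → (nuT ν S Y A = 0 ↔ (ν.restrict Y) A = 0)) :=
  nuT_estimates_general ν hmeas S hone Y hY hYfin
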